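/- With the same operators f_1^±, f_2^± on the so(5) Fock space W(p) as defined by the explicit matrix elements, one has [[f_1^-, f_2^+], f_2^+] = 0 and [[f_1^+, f_2^+], f_2^-] = 2 f_1^+, i.e., the parafermion triple relations [[f_j^ξ, f_k^η], f_l^ε] = ½(ε−η)² δ_{kl} f_j^ξ − ½(ε−ξ)² δ_{jl} f_k^η hold for these instances. -/

import Mathlib

/-
The square roots in the matrix elements disappear after rescaling the basis vector |t⟩ by
`w(t)^(-1/2)`, where `w(t) = (m₁₂-m₁₁)! (m₁₁-m₂₂)! m₂₂! (p-m₁₂)!` is the product of the factorials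
of the four gaps of the pattern. Each matrix element of `f_j^±` moves one unit from a gap `g` to a
gap `h`, with coefficient `√(g (h+1))`, and `w` changes by the factor `(h+1)/g`; in the rescaled
basis the coefficient becomes `g`. So the embedding `|t⟩ ↦ w(t)^(-1/2) δ_t` into finitely
supported functions on `ℤ³` intertwines the `f_j^±` with operators `E_j^±` that have polynomial
coefficients on all of `ℤ³`: nothing is lost at the boundary, because `g` vanishes exactly where a
move would leave the range. For the `E_j^±` the two triple relations are polynomial identities,
and they pull back along the injective embedding.
-/

namespace StmtSO5

variable (p : ℕ)

/-- Validity of a triple `(m₁₂, m₂₂, m₁₁)`: `p ≥ m₁₂ ≥ m₁₁ ≥ m₂₂ ≥ 0`. -/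
def valid (t : ℕ × ℕ × ℕ) : Prop := t.2.1 ≤ t.2.2 ∧ t.2.2 ≤ t.1 ∧ t.1 ≤ p

instance (t : ℕ × ℕ × ℕ) : Decidable (valid p t) := by unfold valid; infer_instance

/-- The so(5) Fock space `W(p)`: the real vector space with basis the valid triples. -/
abbrev V := {t : ℕ × ℕ × ℕ // valid p t} →₀ ℝ

/-- The basis vector `|m₁₂,m₂₂;m₁₁⟩`, interpreted as `0` when the triple is out of range. -/
noncomputable def b (t : ℕ × ℕ × ℕ) : V p :=
  if h : valid p t then Finsupp.single ⟨t, h⟩ 1 else 0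

/-- The inner product making the basis vectors orthonormal. -/
noncomputable def ip (u v : V p) : ℝ := u.sum fun t c => c * v t

/-- The defining matrix elements of `f₁⁺`. -/
def F1pAction (f1p : V p →ₗ[ℝ] V p) : Prop :=
  ∀ m12 m22 m11 : ℕ, valid p (m12, m22, m11) →
    f1p (b p (m12, m22, m11)) =
      Real.sqrt (((m11 : ℝ) - m22 + 1) * ((p : ℝ) - m12)) • b p (m12 + 1, m22, m11 + 1) -
      Real.sqrt (((m12 : ℝ) - m11) * ((m22 : ℝ) + 1)) • b p (m12, m22 + 1, m11 + 1)

/-- The defining matrix elements of `f₂⁺`. -/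
def F2pAction (f2p : V p →ₗ[ℝ] V p) : Prop :=
  ∀ m12 m22 m11 : ℕ, valid p (m12, m22, m11) →
    f2p (b p (m12, m22, m11)) =
      Real.sqrt (((m12 : ℝ) - m11 + 1) * ((p : ℝ) - m12)) • b p (m12 + 1, m22, m11) +
      Real.sqrt (((m11 : ℝ) - m22) * ((m22 : ℝ) + 1)) • b p (m12, m22 + 1, m11)

/-- `g` is the adjoint (transpose with respect to the given orthonormal basis) of `f`. -/
def IsAdjoint (f g : V p →ₗ[ℝ] V p) : Prop := ∀ u v : V p, ip p (g u) v = ip p u (f v)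


lemma ite_eq_ite_of_imp {M : Type*} [Zero M] {P Q : Prop} [Decidable P] [Decidable Q] {a c : M}
    (hPQ : P → Q) (ha : P → a = c) (hc : Q → ¬ P → c = 0) :
    (if P then a else 0) = if Q then c else 0 := by
  by_cases hP : P
  · simp [hP, hPQ hP, ha hP]
  · by_cases hQ : Q <;> simp [hP, hQ, hc]

lemma comp_lie_eq_lie_comp_of_comp_eq {R M N : Type*} [CommRing R] [AddCommGroup M] [Module R M]
    [AddCommGroup N] [Module R N] {ι : M →ₗ[R] N} {a b : Module.End R M} {A B : Module.End R N}
    (ha : ι ∘ₗ a = A ∘ₗ ι) (hb : ι ∘ₗ b = B ∘ₗ ι) : ι ∘ₗ ⁅a, b⁆ = ⁅A, B⁆ ∘ₗ ι := by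
  simp only [Ring.lie_def, Module.End.mul_eq_comp, LinearMap.comp_sub, LinearMap.sub_comp,
    ← LinearMap.comp_assoc, ha, hb]
  simp only [LinearMap.comp_assoc, ha, hb]

section Basis

variable {p}

lemma valid_iff {m12 m22 m11 : ℕ} : valid p (m12, m22, m11) ↔ m22 ≤ m11 ∧ m11 ≤ m12 ∧ m12 ≤ p :=
  Iff.rfl

lemma valid.exists_gaps {m12 m22 m11 : ℕ} (hv : valid p (m12, m22, m11)) :
    ∃ k a d, m11 = m22 + k ∧ m12 = m22 + k + a ∧ p = m22 + k + a + d := by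
  obtain ⟨h1, h2, h3⟩ := valid_iff.1 hv
  exact ⟨m11 - m22, m12 - m11, p - m12, by omega, by omega, by omega⟩

lemma b_coe (x : {t // valid p t}) : b p x = Finsupp.single x 1 := dif_pos x.2

lemma b_of_not_valid {t : ℕ × ℕ × ℕ} (ht : ¬ valid p t) : b p t = 0 := dif_neg ht

lemma b_apply (t : ℕ × ℕ × ℕ) (x : {t // valid p t}) : b p t x = if t = x then 1 else 0 := by
  by_cases ht : valid p t
  · simp [b, ht, Finsupp.single_apply, Subtype.ext_iff]
  · rw [b_of_not_valid ht, if_neg fun h : t = x => ht (h ▸ x.2)]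
    rfl

lemma ip_b_left {t : ℕ × ℕ × ℕ} (ht : valid p t) (v : V p) : ip p (b p t) v = v ⟨t, ht⟩ := by
  simp [ip, b, ht]

lemma ip_b_right (u : V p) (x : {t // valid p t}) : ip p u (b p x) = u x := by
  simp +contextual [ip, b_coe, Finsupp.single_apply]

lemma IsAdjoint.apply_b_apply {f g : V p →ₗ[ℝ] V p} (h : IsAdjoint p f g) {s : ℕ × ℕ × ℕ}
    (hs : valid p s) (x : {t // valid p t}) : g (b p s) x = f (b p x) ⟨s, hs⟩ := by
  rw [← ip_b_right, h, ip_b_left]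

lemma F1pAction.adjoint_apply_b {f1p f1m : V p →ₗ[ℝ] V p} (h1 : F1pAction p f1p)
    (h1m : IsAdjoint p f1p f1m) {m12 m22 m11 : ℕ} (hv : valid p (m12, m22, m11)) :
    f1m (b p (m12, m22, m11)) =
      √(((m11 : ℝ) - m22) * ((p : ℝ) - m12 + 1)) • b p (m12 - 1, m22, m11 - 1) -
      √(((m12 : ℝ) - m11 + 1) * m22) • b p (m12, m22 - 1, m11 - 1) := by
  ext ⟨⟨x12, x22, x11⟩, hx⟩
  rw [h1m.apply_b_apply hv, h1 _ _ _ hx]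
  have := valid_iff.1 hx
  have := valid_iff.1 hv
  simp only [Finsupp.coe_sub, Pi.sub_apply, Finsupp.smul_apply, smul_eq_mul, b_apply,
    Prod.mk.injEq, mul_ite, mul_one, mul_zero]
  congr 1 <;> apply ite_eq_ite_of_imp
  · omega
  · rintro ⟨rfl, rfl, rfl⟩
    push_cast
    ring_nf
  · intro _ _
    obtain ⟨rfl, rfl⟩ : m22 = 0 ∧ m11 = 0 := by omega
    simp
  · omega
  · rintro ⟨rfl, rfl, rfl⟩
    push_cast
    ring_nf
  · intro _ _
    obtain rfl : m22 = 0 := by omega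
    simp

lemma F2pAction.adjoint_apply_b {f2p f2m : V p →ₗ[ℝ] V p} (h2 : F2pAction p f2p)
    (h2m : IsAdjoint p f2p f2m) {m12 m22 m11 : ℕ} (hv : valid p (m12, m22, m11)) :
    f2m (b p (m12, m22, m11)) =
      √(((m12 : ℝ) - m11) * ((p : ℝ) - m12 + 1)) • b p (m12 - 1, m22, m11) +
      √(((m11 : ℝ) - m22 + 1) * m22) • b p (m12, m22 - 1, m11) := by
  ext ⟨⟨x12, x22, x11⟩, hx⟩
  rw [h2m.apply_b_apply hv, h2 _ _ _ hx]
  have := valid_iff.1 hx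
  have := valid_iff.1 hv
  simp only [Finsupp.coe_add, Pi.add_apply, Finsupp.smul_apply, smul_eq_mul, b_apply,
    Prod.mk.injEq, mul_ite, mul_one, mul_zero]
  congr 1 <;> apply ite_eq_ite_of_imp
  · omega
  · rintro ⟨rfl, rfl, rfl⟩
    push_cast
    ring_nf
  · intro _ _
    obtain ⟨rfl, rfl, rfl⟩ : m12 = 0 ∧ m22 = 0 ∧ m11 = 0 := by omega
    simp
  · omega
  · rintro ⟨rfl, rfl, rfl⟩
    push_cast
    ring_nf
  · intro _ _
    obtain rfl : m22 = 0 := by omega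
    simp

end Basis

abbrev ModelSpace := (ℤ × ℤ × ℤ) →₀ ℝ

-- `f₁⁺, f₂⁺, f₁⁻, f₂⁻` in the basis `√w(t) |t⟩`; each coefficient is the gap the move decreases.
noncomputable def E1p : Module.End ℝ ModelSpace := Finsupp.linearCombination ℝ fun m =>
  ((p : ℝ) - m.1) • Finsupp.single (m.1 + 1, m.2.1, m.2.2 + 1) 1 -
    ((m.1 : ℝ) - m.2.2) • Finsupp.single (m.1, m.2.1 + 1, m.2.2 + 1) 1

noncomputable def E2p : Module.End ℝ ModelSpace := Finsupp.linearCombination ℝ fun m =>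
  ((p : ℝ) - m.1) • Finsupp.single (m.1 + 1, m.2.1, m.2.2) 1 +
    ((m.2.2 : ℝ) - m.2.1) • Finsupp.single (m.1, m.2.1 + 1, m.2.2) 1

noncomputable def E1m : Module.End ℝ ModelSpace := Finsupp.linearCombination ℝ fun m =>
  ((m.2.2 : ℝ) - m.2.1) • Finsupp.single (m.1 - 1, m.2.1, m.2.2 - 1) 1 -
    (m.2.1 : ℝ) • Finsupp.single (m.1, m.2.1 - 1, m.2.2 - 1) 1

noncomputable def E2m : Module.End ℝ ModelSpace := Finsupp.linearCombination ℝ fun m =>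
  ((m.1 : ℝ) - m.2.2) • Finsupp.single (m.1 - 1, m.2.1, m.2.2) 1 +
    (m.2.1 : ℝ) • Finsupp.single (m.1, m.2.1 - 1, m.2.2) 1

lemma lie_lie_E1m_E2p_E2p : ⁅⁅E1m, E2p p⁆, E2p p⁆ = 0 := by
  ext ⟨m1, m2, m3⟩ : 2
  simp only [LinearMap.comp_apply, Finsupp.lsingle_apply, Ring.lie_def, Module.End.mul_apply,
    LinearMap.sub_apply, LinearMap.zero_apply, E1m, E2p, Finsupp.linearCombination_single,
    map_add, map_sub, map_smul, smul_add, smul_sub, smul_smul, add_sub_cancel_right,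
    sub_add_cancel]
  match_scalars <;> ring

lemma lie_lie_E1p_E2p_E2m : ⁅⁅E1p p, E2p p⁆, E2m⁆ = (2 : ℝ) • E1p p := by
  ext ⟨m1, m2, m3⟩ : 2
  simp only [LinearMap.comp_apply, Finsupp.lsingle_apply, Ring.lie_def, Module.End.mul_apply,
    LinearMap.sub_apply, LinearMap.smul_apply, E1p, E2p, E2m, Finsupp.linearCombination_single,
    map_add, map_sub, map_smul, smul_add, smul_sub, smul_smul, add_sub_cancel_right,
    sub_add_cancel]
  match_scalars <;> ring

open Nat in
def weight (t : ℕ × ℕ × ℕ) : ℕ := (t.1 - t.2.2)! * (t.2.2 - t.2.1)! * t.2.1 ! * (p - t.1)!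

def castInt (t : ℕ × ℕ × ℕ) : ℤ × ℤ × ℤ := (t.1, t.2.1, t.2.2)

noncomputable def embed : V p →ₗ[ℝ] ModelSpace := Finsupp.linearCombination ℝ fun x =>
  (√(weight p x))⁻¹ • Finsupp.single (castInt x) 1

lemma castInt_injective : Function.Injective castInt := by
  rintro ⟨a1, a2, a3⟩ ⟨c1, c2, c3⟩ h
  simpa [castInt] using h

section Embedding

variable {p}

lemma weight_pos (t : ℕ × ℕ × ℕ) : 0 < weight p t := by
  unfold weight
  positivity

open Nat in
lemma weight_eq {m12 m22 m11 : ℕ} (a k d : ℕ) (ha : m12 = m11 + a) (hk : m11 = m22 + k)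
    (hd : p = m12 + d) : weight p (m12, m22, m11) = a ! * k ! * m22 ! * d ! := by
  subst ha hk hd
  simp [weight]

lemma embed_b {t : ℕ × ℕ × ℕ} (ht : valid p t) :
    embed p (b p t) = (√(weight p t))⁻¹ • Finsupp.single (castInt t) 1 := by
  simp [embed, b, ht]

lemma embed_apply_castInt (u : V p) (x : {t // valid p t}) :
    embed p u (castInt x) = (√(weight p x))⁻¹ * u x := by
  simp +contextual [embed, Finsupp.linearCombination_apply, Finsupp.sum_apply,
    Finsupp.single_apply, castInt_injective.eq_iff, Subtype.val_inj, Finsupp.sum_ite_eq', mul_comm]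

lemma embed_injective : Function.Injective (embed p) := by
  intro u v h
  ext x
  have hw : (√(weight p x))⁻¹ ≠ 0 := by
    have := weight_pos (p := p) x
    positivity
  exact mul_left_cancel₀ hw <| by rw [← embed_apply_castInt, ← embed_apply_castInt, h]

-- A matrix element `√(g e)` of `f_j^±` whose move `t → t'` takes one unit out of a gap of size `g`.
lemma sqrt_smul_embed_b {K c e : ℝ} {g : ℕ} {t t' : ℕ × ℕ × ℕ} {z : ℤ × ℤ × ℤ}
    (hK : K = g * e) (hc : c = g)
    (h : ∀ g', g = g' + 1 → valid p t' ∧ castInt t' = z ∧ K * weight p t = c ^ 2 * weight p t') :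
    √K • embed p (b p t') = ((√(weight p t))⁻¹ * c) • Finsupp.single z 1 := by
  rcases g with _ | g
  · simp [hK, hc]
  obtain ⟨ht', rfl, hW⟩ := h g rfl
  have hw : (0 : ℝ) < weight p t := mod_cast weight_pos t
  have hw' : (0 : ℝ) < weight p t' := mod_cast weight_pos t'
  have hK0 : 0 ≤ K := le_of_mul_le_mul_right (by rw [zero_mul, hW]; positivity) hw
  have key : √K * √(weight p t) = c * √(weight p t') := by
    rw [← Real.sqrt_mul hK0, hW, Real.sqrt_mul (sq_nonneg c), Real.sqrt_sq (by rw [hc]; positivity)]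
  have : 0 < √(weight p t : ℝ) := Real.sqrt_pos.2 hw
  have : 0 < √(weight p t' : ℝ) := Real.sqrt_pos.2 hw'
  rw [embed_b ht', smul_smul]
  congr 1
  field_simp
  linarith

lemma F2pAction.embed_comp {f2p : V p →ₗ[ℝ] V p} (h2 : F2pAction p f2p) :
    embed p ∘ₗ f2p = E2p p ∘ₗ embed p := by
  ext ⟨⟨m12, m22, m11⟩, hx⟩ : 2
  simp only [LinearMap.comp_apply, Finsupp.lsingle_apply, ← b_coe]
  rw [h2 _ _ _ hx, map_add, map_smul, map_smul, embed_b hx, map_smul, E2p,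
    Finsupp.linearCombination_single, one_smul, smul_add, smul_smul, smul_smul]
  simp only [castInt, Int.cast_natCast]
  obtain ⟨k, a, d, rfl, rfl, rfl⟩ := hx.exists_gaps
  congr 1
  · refine sqrt_smul_embed_b (g := d) (e := a + 1) (by push_cast; ring) (by push_cast; ring) ?_
    rintro d rfl
    refine ⟨by rw [valid_iff]; omega, by simp [castInt], ?_⟩
    rw [weight_eq a k (d + 1) rfl rfl rfl, weight_eq (a + 1) k d (by omega) rfl (by omega)]
    push_cast [Nat.factorial_succ]
    ring
  · refine sqrt_smul_embed_b (g := k) (e := m22 + 1) (by push_cast; ring) (by push_cast; ring) ?_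
    rintro k rfl
    refine ⟨by rw [valid_iff]; omega, by simp [castInt], ?_⟩
    rw [weight_eq a (k + 1) d rfl rfl rfl, weight_eq a k d (by omega) (by omega) (by omega)]
    push_cast [Nat.factorial_succ]
    ring

lemma F1pAction.embed_comp {f1p : V p →ₗ[ℝ] V p} (h1 : F1pAction p f1p) :
    embed p ∘ₗ f1p = E1p p ∘ₗ embed p := by
  ext ⟨⟨m12, m22, m11⟩, hx⟩ : 2
  simp only [LinearMap.comp_apply, Finsupp.lsingle_apply, ← b_coe]
  rw [h1 _ _ _ hx, map_sub, map_smul, map_smul, embed_b hx, map_smul, E1p,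
    Finsupp.linearCombination_single, one_smul, smul_sub, smul_smul, smul_smul]
  simp only [castInt, Int.cast_natCast]
  obtain ⟨k, a, d, rfl, rfl, rfl⟩ := hx.exists_gaps
  congr 1
  · refine sqrt_smul_embed_b (g := d) (e := k + 1) (by push_cast; ring) (by push_cast; ring) ?_
    rintro d rfl
    refine ⟨by rw [valid_iff]; omega, by simp [castInt], ?_⟩
    rw [weight_eq a k (d + 1) rfl rfl rfl, weight_eq a (k + 1) d (by omega) (by omega) (by omega)]
    push_cast [Nat.factorial_succ]
    ring
  · refine sqrt_smul_embed_b (g := a) (e := m22 + 1) (by push_cast; ring) (by push_cast; ring) ?_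
    rintro a rfl
    refine ⟨by rw [valid_iff]; omega, by simp [castInt], ?_⟩
    rw [weight_eq (a + 1) k d rfl rfl rfl, weight_eq a k d (by omega) (by omega) (by omega)]
    push_cast [Nat.factorial_succ]
    ring

lemma F1pAction.embed_comp_adjoint {f1p f1m : V p →ₗ[ℝ] V p} (h1 : F1pAction p f1p)
    (h1m : IsAdjoint p f1p f1m) : embed p ∘ₗ f1m = E1m ∘ₗ embed p := by
  ext ⟨⟨m12, m22, m11⟩, hx⟩ : 2
  simp only [LinearMap.comp_apply, Finsupp.lsingle_apply, ← b_coe]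
  rw [h1.adjoint_apply_b h1m hx, map_sub, map_smul, map_smul, embed_b hx, map_smul, E1m,
    Finsupp.linearCombination_single, one_smul, smul_sub, smul_smul, smul_smul]
  simp only [castInt, Int.cast_natCast]
  obtain ⟨k, a, d, rfl, rfl, rfl⟩ := hx.exists_gaps
  congr 1
  · refine sqrt_smul_embed_b (g := k) (e := d + 1) (by push_cast; ring) (by push_cast; ring) ?_
    rintro k rfl
    refine ⟨by rw [valid_iff]; omega, by simp [castInt]; omega, ?_⟩
    rw [weight_eq a (k + 1) d rfl rfl rfl, weight_eq a k (d + 1) (by omega) (by omega) (by omega)]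
    push_cast [Nat.factorial_succ]
    ring
  · refine sqrt_smul_embed_b (g := m22) (e := a + 1) (by push_cast; ring) rfl ?_
    rintro m22 rfl
    refine ⟨by rw [valid_iff]; omega, by simp [castInt]; omega, ?_⟩
    rw [weight_eq a k d rfl rfl rfl, weight_eq (a + 1) k d (by omega) (by omega) (by omega)]
    push_cast [Nat.factorial_succ]
    ring

lemma F2pAction.embed_comp_adjoint {f2p f2m : V p →ₗ[ℝ] V p} (h2 : F2pAction p f2p)
    (h2m : IsAdjoint p f2p f2m) : embed p ∘ₗ f2m = E2m ∘ₗ embed p := by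
  ext ⟨⟨m12, m22, m11⟩, hx⟩ : 2
  simp only [LinearMap.comp_apply, Finsupp.lsingle_apply, ← b_coe]
  rw [h2.adjoint_apply_b h2m hx, map_add, map_smul, map_smul, embed_b hx, map_smul, E2m,
    Finsupp.linearCombination_single, one_smul, smul_add, smul_smul, smul_smul]
  simp only [castInt, Int.cast_natCast]
  obtain ⟨k, a, d, rfl, rfl, rfl⟩ := hx.exists_gaps
  congr 1
  · refine sqrt_smul_embed_b (g := a) (e := d + 1) (by push_cast; ring) (by push_cast; ring) ?_
    rintro a rfl
    refine ⟨by rw [valid_iff]; omega, by simp [castInt]; omega, ?_⟩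
    rw [weight_eq (a + 1) k d rfl rfl rfl, weight_eq a k (d + 1) (by omega) (by omega) (by omega)]
    push_cast [Nat.factorial_succ]
    ring
  · refine sqrt_smul_embed_b (g := m22) (e := k + 1) (by push_cast; ring) rfl ?_
    rintro m22 rfl
    refine ⟨by rw [valid_iff]; omega, by simp [castInt], ?_⟩
    rw [weight_eq a k d rfl rfl rfl, weight_eq a (k + 1) d (by omega) (by omega) (by omega)]
    push_cast [Nat.factorial_succ]
    ring

end Embedding

theorem so5_triple_relations
    (f1p f2p f1m f2m : V p →ₗ[ℝ] V p)
    (h1 : F1pAction p f1p) (h2 : F2pAction p f2p)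
    (h1m : IsAdjoint p f1p f1m) (h2m : IsAdjoint p f2p f2m) :
    let c : (V p →ₗ[ℝ] V p) → (V p →ₗ[ℝ] V p) → (V p →ₗ[ℝ] V p) :=
      fun a b => a ∘ₗ b - b ∘ₗ a
    c (c f1m f2p) f2p = 0 ∧ c (c f1p f2p) f2m = (2 : ℝ) • f1p := by
  have hc (a b : Module.End ℝ (V p)) : a ∘ₗ b - b ∘ₗ a = ⁅a, b⁆ := (Ring.lie_def a b).symm
  have I1p := h1.embed_comp
  have I2p := h2.embed_comp
  have I1m := h1.embed_comp_adjoint h1m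
  have I2m := h2.embed_comp_adjoint h2m
  simp only [hc]
  constructor <;> rw [← LinearMap.cancel_left embed_injective]
  · rw [comp_lie_eq_lie_comp_of_comp_eq (comp_lie_eq_lie_comp_of_comp_eq I1m I2p) I2p,
      lie_lie_E1m_E2p_E2p, LinearMap.zero_comp, LinearMap.comp_zero]
  · rw [comp_lie_eq_lie_comp_of_comp_eq (comp_lie_eq_lie_comp_of_comp_eq I1p I2p) I2m,
      lie_lie_E1p_E2p_E2m, LinearMap.smul_comp, LinearMap.comp_smul, I1p]

end StmtSO5
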